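/- arXiv:1501.06831 — 6 statements merged into one kernel-verified Lean document; each statement's English description precedes it below -/
import Mathlib

section
/- Let A be a finite alphabet and H a group. For every set L of patterns over H, the set S_L is empty if and only if there exists a finite subset L₀ of L such that S_{L₀} is empty. -/
/-- A configuration `x : H → A` disagrees with a pattern `p = (D, w)`
(a finite domain `D` together with a word `w` on it) if they differ somewhere on `D`. -/
def Disagrees {H A : Type*} (x : H → A) (p : Finset H × (H → A)) : Prop :=
  ∃ g ∈ p.1, x g ≠ p.2 g

/-- `SL L` is the set of configurations disagreeing with every pattern in `L`. -/
def SL {H A : Type*} (L : Set (Finset H × (H → A))) : Set (H → A) :=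
  {x | ∀ p ∈ L, Disagrees x p}

/-- For a finite alphabet `A` and a group `H`, for every set `L` of patterns over `H`,
`S_L` is empty iff there is a finite subset `L₀ ⊆ L` with `S_{L₀}` empty. -/
theorem stmt_0 {A H : Type*} [Fintype A] [Group H]
    (L : Set (Finset H × (H → A))) :
    SL L = ∅ ↔ ∃ L₀ ⊆ L, L₀.Finite ∧ SL L₀ = ∅ := by
  constructor
  · intro h
    letI : TopologicalSpace A := ⊥
    haveI : DiscreteTopology A := ⟨rfl⟩
    haveI : CompactSpace A := Finite.compactSpace
    have hclosed : ∀ p : L, IsClosed {x : H → A | Disagrees x p.1} := by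
      rintro ⟨⟨D, w⟩, hp⟩
      have : {x : H → A | Disagrees x (D, w)}
          = ⋃ g ∈ (D : Finset H), {x : H → A | x g ≠ w g} := by
        ext x; simp [Disagrees]
      rw [this]
      refine Set.Finite.isClosed_biUnion (D.finite_toSet) ?_
      intro g _
      have : {x : H → A | x g ≠ w g} = (fun x : H → A => x g) ⁻¹' {w g}ᶜ := rfl
      rw [this]
      exact (isClosed_discrete _).preimage (continuous_apply g)
    have hempty : (Set.univ : Set (H → A)) ∩ ⋂ p : L, {x : H → A | Disagrees x p.1} = ∅ := by
      rw [Set.univ_inter]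
      ext x
      simp only [Set.mem_iInter, Set.mem_setOf_eq, Set.mem_empty_iff_false, iff_false]
      intro hx
      have : x ∈ SL L := fun p hp => hx ⟨p, hp⟩
      rw [h] at this
      exact this
    obtain ⟨u, hu⟩ := CompactSpace.isCompact_univ.elim_finite_subfamily_closed _ hclosed hempty
    refine ⟨Subtype.val '' (u : Set L), ?_, (u.finite_toSet.image _), ?_⟩
    · rintro p ⟨q, _, rfl⟩; exact q.2
    · ext x
      simp only [SL, Set.mem_setOf_eq, Set.mem_empty_iff_false, iff_false]
      intro hx
      rw [Set.univ_inter] at hu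
      have : x ∈ ⋂ p ∈ u, {x : H → A | Disagrees x (p : L).1} := by
        simp only [Set.mem_iInter]
        intro p hp
        exact hx p.1 ⟨p, hp, rfl⟩
      rw [hu] at this
      exact this
  · rintro ⟨L₀, hsub, _, h⟩
    rw [Set.eq_empty_iff_forall_notMem] at h ⊢
    intro x hx
    exact h x fun p hp => hx p (hsub hp)
end

section
/- Let G be a group and H a finite normal subgroup of G. Let Z = {x : G → H | for all g ∈ G and all h ∈ H with h ≠ 1, x(h g) ≠ x(g)}. Then Z is nonempty, Z is shift-invariant (if x ∈ Z and t ∈ G then t·x ∈ Z), and for every x ∈ Z one has Stab(x) ∩ H = {1}. -/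
/-- The shift action of a group `G` on configurations: `(g • x) h = x (g⁻¹ h)`. -/
def Shift {G A : Type*} [Group G] (g : G) (x : G → A) : G → A :=
  fun h => x (g⁻¹ * h)

/-- The stabilizer of a configuration under the shift action. -/
def Stab {G A : Type*} [Group G] (x : G → A) : Set G :=
  {g | Shift g x = x}

/-- The set `Z = {x : G → H | ∀ g ∈ G, ∀ h ∈ H, h ≠ 1 → x (h g) ≠ x g}`,
where the finite normal subgroup `H` is viewed as a finite alphabet. -/
def Zconf {G : Type*} [Group G] (H : Subgroup G) : Set (G → H) :=
  {x | ∀ g : G, ∀ h : H, h ≠ 1 → x ((h : G) * g) ≠ x g}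

/-- For a finite normal subgroup `H` of `G`, the set `Z` is nonempty, shift-invariant,
and every `x ∈ Z` satisfies `Stab(x) ∩ H = {1}`. -/
theorem stmt_4 {G : Type*} [Group G] (H : Subgroup G) [H.Normal]
    (hHfin : (H : Set G).Finite) :
    (Zconf H).Nonempty ∧
      (∀ x ∈ Zconf H, ∀ t : G, Shift t x ∈ Zconf H) ∧
      (∀ x ∈ Zconf H, Stab x ∩ (H : Set G) = {1}) := by
  refine ⟨?_, ?_, ?_⟩
  · -- nonempty
    have hmem : ∀ g : G, (Quotient.out (QuotientGroup.mk g : G ⧸ H))⁻¹ * g ∈ H := by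
      intro g
      have h1 : (QuotientGroup.mk (Quotient.out (QuotientGroup.mk g : G ⧸ H)) : G ⧸ H)
          = QuotientGroup.mk g := Quotient.out_eq _
      exact (QuotientGroup.eq).mp h1
    refine ⟨fun g => ⟨_, hmem g⟩, ?_⟩
    intro g h hne heq
    have hq : (QuotientGroup.mk ((h : G) * g) : G ⧸ H) = QuotientGroup.mk g := by
      rw [QuotientGroup.eq]
      have : g⁻¹ * (h : G)⁻¹ * g ∈ H :=
        Subgroup.Normal.conj_mem' ‹H.Normal› (h : G)⁻¹ (H.inv_mem h.2) g
      simpa [mul_assoc, mul_inv_rev] using this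
    apply hne
    have := congrArg (Subtype.val) heq
    simp only [hq] at this
    have h3 : (h : G) * g = 1 * g := by simpa using mul_left_cancel this
    exact Subtype.ext (mul_right_cancel h3)
  · -- shift invariance
    intro x hx t g h hne
    simp only [Shift]
    have hconj : t⁻¹ * (h : G) * t ∈ H := Subgroup.Normal.conj_mem' ‹H.Normal› (h : G) h.2 t
    have hne' : (⟨t⁻¹ * (h : G) * t, hconj⟩ : H) ≠ 1 := by
      intro hc
      apply hne
      have : t⁻¹ * (h : G) * t = 1 := congrArg Subtype.val hc
      have : (h : G) = 1 := by
        have := congrArg (fun z => t * z * t⁻¹) this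
        simpa [mul_assoc] using this
      exact Subtype.ext this
    have := hx (t⁻¹ * g) ⟨t⁻¹ * (h : G) * t, hconj⟩ hne'
    simpa [mul_assoc] using this
  · -- stabilizer
    intro x hx
    ext g
    constructor
    · rintro ⟨hstab, hgH⟩
      by_contra hg1
      have hne : (⟨g⁻¹, H.inv_mem hgH⟩ : H) ≠ 1 := by
        intro hc
        apply hg1
        have : g⁻¹ = 1 := congrArg Subtype.val hc
        simpa using congrArg Inv.inv this
      apply hx 1 ⟨g⁻¹, H.inv_mem hgH⟩ hne
      have := congrFun hstab 1
      simpa [Shift] using this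
    · rintro rfl
      refine ⟨?_, H.one_mem⟩
      show Shift 1 x = x
      funext g
      simp [Shift]
end

section
/- Let G be a simple group and a ∈ G with a ≠ 1. Let X = {x : G → Fin 3 | for all g ∈ G, x(g * a) ≠ x(g)}. Then X is nonempty, shift-invariant, and for every x ∈ X the normal stabilizer ⋂_{h ∈ G} Stab(h·x) equals {1} (so X is a normally aperiodic SFT on G). -/
noncomputable def col (n k : ℤ) : Fin 3 :=
  if k % n = n - 1 then 2 else if k % n % 2 = 0 then 0 else 1

lemma col_period {n k k' : ℤ} (h : k ≡ k' [ZMOD n]) : col n k = col n k' := by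
  unfold col
  rw [show k % n = k' % n from h]

lemma col_succ {n : ℤ} (hn : n = 0 ∨ 2 ≤ n) (k : ℤ) : col n (k + 1) ≠ col n k := by
  rcases hn with rfl | hn
  · unfold col
    simp only [Int.emod_zero, zero_sub]
    rcases eq_or_ne k (-1) with rfl | hk
    · norm_num
      decide
    · have hk1 : k + 1 = -1 ∨ k + 1 ≠ -1 := by tauto
      rcases hk1 with hk1 | hk1
      · have h2 : k % 2 = 0 := by omega
        rw [hk1, if_pos rfl, if_neg hk]
        simp [h2]
      · have h1 : (k+1) % 2 = 0 ∨ (k+1) % 2 = 1 := by omega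
        have h2 : k % 2 = 0 ∨ k % 2 = 1 := by omega
        rcases h1 with h1 | h1 <;> rcases h2 with h2 | h2 <;>
          · first
            | omega
            | simp [hk, hk1, h1, h2]
  · have hmod : k ≡ k % n [ZMOD n] := (Int.emod_emod_of_dvd k dvd_rfl).symm
    have e1 : col n (k + 1) = col n (k % n + 1) := col_period (hmod.add_right 1)
    have e2 : col n k = col n (k % n) := col_period hmod
    rw [e1, e2]
    set m := k % n with hm
    have h0 : 0 ≤ m := Int.emod_nonneg k (by omega)
    have h1 : m < n := Int.emod_lt_of_pos k (by omega)
    have hmn : m % n = m := Int.emod_eq_of_lt h0 h1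
    rcases eq_or_lt_of_le (by omega : m + 1 ≤ n) with he | hlt
    · have h2 : (m+1) % n = 0 := by rw [he, Int.emod_self]
      unfold col
      rw [h2, hmn]
      rw [if_neg (by omega), if_pos (by omega : m = n - 1), if_pos (by norm_num)]
      decide
    · have h2 : (m+1) % n = m + 1 := Int.emod_eq_of_lt (by omega) hlt
      unfold col
      rw [h2, hmn, if_neg (by omega : ¬ m = n - 1)]
      rcases eq_or_ne (m + 1) (n - 1) with he2 | he2
      · rw [if_pos he2]
        rcases (by omega : m % 2 = 0 ∨ m % 2 = 1) with h3 | h3 <;> simp [h3]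
      · rw [if_neg he2]
        have h4 : (m+1) % 2 = 1 - m % 2 := by omega
        rcases (by omega : m % 2 = 0 ∨ m % 2 = 1) with h3 | h3 <;>
          simp [h3, h4]

lemma exists_exp {G : Type*} [Group G] (a g : G) :
    ∃ k : ℤ, g = (QuotientGroup.mk (s := Subgroup.zpowers a) g).out * a ^ k := by
  have h : ((QuotientGroup.mk (s := Subgroup.zpowers a) g).out)⁻¹ * g ∈ Subgroup.zpowers a := by
    rw [← QuotientGroup.eq, QuotientGroup.out_eq']
  obtain ⟨k, hk⟩ := Subgroup.mem_zpowers_iff.mp h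
  exact ⟨k, by rw [hk]; group⟩

noncomputable def confExp {G : Type*} [Group G] (a : G) (g : G) : ℤ :=
  (exists_exp a g).choose

lemma confExp_spec {G : Type*} [Group G] (a g : G) :
    g = (QuotientGroup.mk (s := Subgroup.zpowers a) g).out * a ^ (confExp a g) :=
  (exists_exp a g).choose_spec

lemma mk_mul_a {G : Type*} [Group G] (a g : G) :
    QuotientGroup.mk (s := Subgroup.zpowers a) (g * a) = QuotientGroup.mk g := by
  rw [QuotientGroup.eq]
  simpa using Subgroup.mem_zpowers a⁻¹

/-- The configuration: proper coloring along right `a`-orbits. -/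
noncomputable def conf {G : Type*} [Group G] (a : G) (g : G) : Fin 3 :=
  col (orderOf a) (confExp a g)

lemma conf_mem {G : Type*} [Group G] (a : G) (ha : a ≠ 1) (g : G) :
    conf a (g * a) ≠ conf a g := by
  have hq := mk_mul_a a g
  have h1 := confExp_spec a g
  have h2 := confExp_spec a (g * a)
  rw [hq] at h2
  -- g * a = out * a ^ confExp a (g*a)  and  g * a = out * a ^ (confExp a g + 1)
  have h3 : ((QuotientGroup.mk (s := Subgroup.zpowers a) g).out) * a ^ (confExp a (g * a))
      = ((QuotientGroup.mk (s := Subgroup.zpowers a) g).out) * a ^ (confExp a g + 1) := by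
    rw [← h2, zpow_add_one, ← mul_assoc, ← h1]
  have h4 : a ^ (confExp a (g * a)) = a ^ (confExp a g + 1) := mul_left_cancel h3
  have h5 : confExp a (g * a) ≡ confExp a g + 1 [ZMOD (orderOf a)] :=
    zpow_eq_zpow_iff_modEq.mp h4
  have hn : (orderOf a : ℤ) = 0 ∨ 2 ≤ (orderOf a : ℤ) := by
    have : orderOf a ≠ 1 := fun h => ha (orderOf_eq_one_iff.mp h)
    omega
  unfold conf
  rw [col_period h5]
  exact col_succ hn (confExp a g)

lemma shift_shift {G A : Type*} [Group G] (g h : G) (x : G → A) :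
    Shift g (Shift h x) = Shift (g * h) x := by
  funext k
  simp [Shift, mul_assoc]

lemma shift_one {G A : Type*} [Group G] (x : G → A) : Shift (1 : G) x = x := by
  funext k
  simp [Shift]

/-- For a simple group `G` and `a ≠ 1`, the SFT
`X = {x : G → Fin 3 | ∀ g, x (g * a) ≠ x g}` is nonempty, shift-invariant, and every
`x ∈ X` has trivial normal stabilizer `⋂ h, Stab (h • x) = {1}`. -/
theorem stmt_10 {G : Type*} [Group G] [IsSimpleGroup G] (a : G) (ha : a ≠ 1) :
    ({x : G → Fin 3 | ∀ g : G, x (g * a) ≠ x g}).Nonempty ∧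
      (∀ x ∈ {x : G → Fin 3 | ∀ g : G, x (g * a) ≠ x g}, ∀ g : G,
        Shift g x ∈ {x : G → Fin 3 | ∀ g : G, x (g * a) ≠ x g}) ∧
      (∀ x ∈ {x : G → Fin 3 | ∀ g : G, x (g * a) ≠ x g},
        (⋂ h : G, Stab (Shift h x)) = ({1} : Set G)) := by
  refine ⟨⟨conf a, fun g => conf_mem a ha g⟩, ?_, ?_⟩
  · intro x hx g h
    have := hx (g⁻¹ * h)
    simpa [Shift, mul_assoc] using this
  · intro x hx
    set N : Subgroup G :=
      { carrier := ⋂ h : G, Stab (Shift h x)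
        one_mem' := by
          simp only [Set.mem_iInter]
          intro h
          exact shift_one _
        mul_mem' := by
          intro p q hp hq
          simp only [Set.mem_iInter] at *
          intro h
          have hq' : Shift (q * h) x = Shift h x := by
            have := hq h
            rwa [Stab, Set.mem_setOf_eq, shift_shift] at this
          have hp' : Shift (p * (q * h)) x = Shift (q * h) x := by
            have := hp (q * h)
            rwa [Stab, Set.mem_setOf_eq, shift_shift] at this
          show Shift (p * q) (Shift h x) = Shift h x
          rw [shift_shift, mul_assoc, hp', hq']
        inv_mem' := by
          intro p hp
          simp only [Set.mem_iInter] at *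
          intro h
          have hp' : Shift (p * (p⁻¹ * h)) x = Shift (p⁻¹ * h) x := by
            have := hp (p⁻¹ * h)
            rwa [Stab, Set.mem_setOf_eq, shift_shift] at this
          show Shift p⁻¹ (Shift h x) = Shift h x
          rw [shift_shift]
          rw [show p * (p⁻¹ * h) = h by group] at hp'
          exact hp'.symm } with hN
    have hNnormal : N.Normal := by
      constructor
      intro p hp g
      have hp' : ∀ h : G, Shift (p * h) x = Shift h x := by
        intro h
        have := Set.mem_iInter.mp hp h
        rwa [Stab, Set.mem_setOf_eq, shift_shift] at this
      show g * p * g⁻¹ ∈ (⋂ h : G, Stab (Shift h x))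
      rw [Set.mem_iInter]
      intro h
      show Shift (g * p * g⁻¹) (Shift h x) = Shift h x
      rw [shift_shift]
      have key : Shift (g * p * g⁻¹ * h) x = Shift g (Shift (p * (g⁻¹ * h)) x) := by
        rw [shift_shift]; congr 1; group
      rw [key, hp' (g⁻¹ * h), shift_shift]
      congr 1
      group
    have hNtop : N ≠ ⊤ := by
      intro htop
      have hall : ∀ g : G, Shift g x = x := by
        intro g
        have hg : g ∈ N := htop ▸ Subgroup.mem_top g
        have := Set.mem_iInter.mp hg 1
        rwa [Stab, Set.mem_setOf_eq, shift_one] at this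
      have hconst : ∀ g : G, x g = x 1 := by
        intro g
        have := congrFun (hall g⁻¹) 1
        simpa [Shift] using this
      have := hx 1
      rw [one_mul, hconst a] at this
      exact this rfl
    have hbot : N = ⊥ := (hNnormal.eq_bot_or_eq_top).resolve_right hNtop
    ext g
    constructor
    · intro hg
      have : g ∈ N := hg
      rw [hbot, Subgroup.mem_bot] at this
      simpa using this
    · intro hg
      have : g = 1 := by simpa using hg
      subst this
      exact (N.one_mem : (1 : G) ∈ (⋂ h : G, Stab (Shift h x)))
end

section
/- Let p be a prime and G an infinite group in which every subgroup other than the trivial subgroup and G itself has order p (a Tarski monster group). Let a ∈ G with a ≠ 1 and X = {x : G → Fin 3 | for all g ∈ G, x(g * a) ≠ x(g)}. Then X is nonempty and for every x ∈ X the stabilizer Stab(x) is finite (so X is a strongly aperiodic SFT on G). -/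
section aux

variable {G : Type*} [Group G]

/-- In a Tarski monster group, every nontrivial element has order `p`. -/
lemma tarski_orderOf [Infinite G] (p : ℕ) (hp : p.Prime)
    (hTarski : ∀ H : Subgroup G, H ≠ ⊥ → H ≠ ⊤ → Nat.card H = p)
    (a : G) (ha : a ≠ 1) : orderOf a = p := by
  have hbot : Subgroup.zpowers a ≠ ⊥ := by
    simpa [Subgroup.zpowers_eq_bot] using ha
  have htop : Subgroup.zpowers a ≠ ⊤ := by
    intro htop
    by_cases hfin : IsOfFinOrder a
    · -- zpowers a is finite, but G is infinite
      have : (Subgroup.zpowers a : Set G).Finite := by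
        have h1 : Nat.card (Subgroup.zpowers a) = orderOf a := Nat.card_zpowers a
        have h2 : 0 < orderOf a := hfin.orderOf_pos
        have : Nat.card (Subgroup.zpowers a) ≠ 0 := by omega
        have := Nat.finite_of_card_ne_zero this
        exact Set.toFinite _
      rw [htop] at this
      simp only [Subgroup.coe_top] at this
      exact Set.infinite_univ this
    · -- infinite order; consider zpowers (a^2)
      have hsq : a ^ (2:ℕ) ≠ 1 := by
        intro h
        exact hfin (isOfFinOrder_iff_pow_eq_one.mpr ⟨2, by norm_num, h⟩)
      have hKbot : Subgroup.zpowers (a ^ (2:ℕ)) ≠ ⊥ := by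
        simpa [Subgroup.zpowers_eq_bot] using hsq
      have hKtop : Subgroup.zpowers (a ^ (2:ℕ)) ≠ ⊤ := by
        intro hK
        have hamem : a ∈ Subgroup.zpowers (a ^ (2:ℕ)) := hK ▸ Subgroup.mem_top a
        obtain ⟨m, hm⟩ := hamem
        have h2 : (a ^ ((2:ℕ):ℤ)) ^ m = a := by rw [zpow_natCast]; exact hm
        have : a ^ ((2:ℤ) * m) = a ^ (1:ℤ) := by
          rw [zpow_mul]
          simpa using h2
        have hmod := zpow_eq_zpow_iff_modEq.mp this
        rw [orderOf_eq_zero_iff.mpr hfin] at hmod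
        have : (2:ℤ) * m = 1 := by
          simpa [Int.ModEq] using hmod
        omega
      have hcard := hTarski _ hKbot hKtop
      -- but zpowers (a^2) is infinite
      have h1 : Nat.card (Subgroup.zpowers (a ^ (2:ℕ))) = orderOf (a ^ (2:ℕ)) :=
        Nat.card_zpowers _
      have h2 : orderOf (a ^ (2:ℕ)) = 0 := by
        rw [orderOf_eq_zero_iff]
        intro hf
        exact hfin (hf.of_pow (by norm_num))
      rw [h1, h2] at hcard
      exact hp.pos.ne' hcard.symm
  have := hTarski _ hbot htop
  rw [← Nat.card_zpowers a]
  exact this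

end aux

/-- If `G` is a Tarski monster group (an infinite group all of whose subgroups other than
the trivial subgroup and `G` itself have order a fixed prime `p`) and `a ≠ 1`, then
`X = {x : G → Fin 3 | ∀ g, x (g * a) ≠ x g}` is nonempty and every `x ∈ X` has finite
stabilizer. -/
theorem stmt_11 {G : Type*} [Group G] [Infinite G] (p : ℕ) (hp : p.Prime)
    (hTarski : ∀ H : Subgroup G, H ≠ ⊥ → H ≠ ⊤ → Nat.card H = p)
    (a : G) (ha : a ≠ 1) :
    ({x : G → Fin 3 | ∀ g : G, x (g * a) ≠ x g}).Nonempty ∧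
      (∀ x ∈ {x : G → Fin 3 | ∀ g : G, x (g * a) ≠ x g}, (Stab x).Finite) := by
  have hord : orderOf a = p := tarski_orderOf p hp hTarski a ha
  haveI : NeZero p := ⟨hp.pos.ne'⟩
  constructor
  · -- Nonemptiness: build a configuration by coloring the cosets of ⟨a⟩.
    classical
    -- discrete log along cosets of zpowers a
    have hmem : ∀ g : G, ∃ m : ℤ,
        a ^ m = ((QuotientGroup.mk g : G ⧸ Subgroup.zpowers a)).out⁻¹ * g := by
      intro g
      have : ((QuotientGroup.mk g : G ⧸ Subgroup.zpowers a)).out⁻¹ * g ∈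
          Subgroup.zpowers a := by
        rw [← QuotientGroup.eq]
        exact QuotientGroup.out_eq' _
      obtain ⟨m, hm⟩ := this
      exact ⟨m, hm⟩
    set dlogZ : G → ℤ := fun g => Classical.choose (hmem g) with hdlogZ
    have hdlog_spec : ∀ g : G, a ^ (dlogZ g) =
        ((QuotientGroup.mk g : G ⧸ Subgroup.zpowers a)).out⁻¹ * g :=
      fun g => Classical.choose_spec (hmem g)
    set dlog : G → ZMod p := fun g => ((dlogZ g : ℤ) : ZMod p) with hdlog
    -- the key step: dlog (g * a) = dlog g + 1
    have hstep : ∀ g : G, dlog (g * a) = dlog g + 1 := by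
      intro g
      have hq : (QuotientGroup.mk (g * a) : G ⧸ Subgroup.zpowers a) =
          QuotientGroup.mk g := by
        rw [QuotientGroup.eq]
        exact ⟨-1, by simp [mul_assoc]⟩
      have h1 : a ^ (dlogZ (g * a)) = a ^ (dlogZ g + 1) := by
        rw [hdlog_spec (g * a), hq, zpow_add, hdlog_spec g, zpow_one, mul_assoc]
      have hmod := zpow_eq_zpow_iff_modEq.mp h1
      rw [hord] at hmod
      have := (ZMod.intCast_eq_intCast_iff _ _ _).mpr hmod
      simpa [hdlog] using this
    -- a proper 3-coloring of the cycle ZMod p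
    set c : ZMod p → Fin 3 := fun i =>
      if i.val = p - 1 then 2 else ⟨i.val % 2, by omega⟩ with hc
    have hp2 : 2 ≤ p := hp.two_le
    haveI : Fact (1 < p) := ⟨hp.one_lt⟩
    have hcne : ∀ i : ZMod p, c (i + 1) ≠ c i := by
      intro i
      have hvlt : i.val < p := ZMod.val_lt i
      have hv1 : ((1 : ZMod p)).val = 1 := ZMod.val_one p
      have hadd : (i + 1).val = (i.val + 1) % p := by
        rw [ZMod.val_add, hv1]
      by_cases h : i.val = p - 1
      · have h0 : (i + 1).val = 0 := by
          rw [hadd, h, Nat.sub_add_cancel (by omega), Nat.mod_self]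
        simp only [hc, h0, h]
        have : ¬ (0 = p - 1) := by omega
        simp [this]
      · have h1 : (i + 1).val = i.val + 1 := by
          rw [hadd, Nat.mod_eq_of_lt (by omega)]
        by_cases h2 : i.val + 1 = p - 1
        · simp only [hc, h1, h2, h, if_pos rfl, if_neg h]
          intro hcontra
          have := congrArg Fin.val hcontra
          simp at this
          omega
        · simp only [hc, h1, h2, h, if_neg h2, if_neg h]
          intro hcontra
          have := congrArg Fin.val hcontra
          simp at this
          omega
    refine ⟨fun g => c (dlog g), ?_⟩
    intro g
    show c (dlog (g * a)) ≠ c (dlog g)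
    rw [hstep g]
    exact hcne (dlog g)
  · -- Finiteness of stabilizers.
    intro x hx
    -- Stab x is the carrier of a subgroup
    have hmul : ∀ g₁ g₂ : G, Shift (g₁ * g₂) x = Shift g₁ (Shift g₂ x) := by
      intro g₁ g₂
      funext h
      simp [Shift, mul_assoc]
    set S : Subgroup G :=
      { carrier := Stab x
        one_mem' := by funext h; simp [Shift, Stab]
        mul_mem' := by
          intro g₁ g₂ h₁ h₂
          show Shift (g₁ * g₂) x = x
          rw [hmul, h₂, h₁]
        inv_mem' := by
          intro g hg
          have hg' : Shift g x = x := hg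
          show Shift g⁻¹ x = x
          calc Shift g⁻¹ x = Shift g⁻¹ (Shift g x) := by rw [hg']
            _ = x := by funext h; simp [Shift] } with hS
    have hcarrier : Stab x = (S : Set G) := rfl
    rw [hcarrier]
    -- S ≠ ⊤ since x is not constant
    have hStop : S ≠ ⊤ := by
      intro htop
      have hall : ∀ g : G, Shift g x = x := by
        intro g
        have : g ∈ S := htop ▸ Subgroup.mem_top g
        exact this
      have h1 : x 1 = x a := by simpa [Shift] using congrFun (hall a) a
      have h2 := hx 1
      rw [one_mul] at h2
      exact h2 h1.symm
    by_cases hSbot : S = ⊥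
    · rw [hSbot]
      simp
    · have hcard := hTarski S hSbot hStop
      have : Finite S := Nat.finite_of_card_ne_zero (by rw [hcard]; exact hp.pos.ne')
      exact (S : Set G).toFinite
end

section
/- Let G be a group and a_1, …, a_n elements of G, all distinct from the identity, such that every element g ∈ G with g ≠ 1 is conjugate to some a_i (so G has finitely many conjugacy classes, as in Ivanov's monster groups). Let X = {x : G → Fin (2n+1) | for all g ∈ G and all i ∈ {1,…,n}, x(g * a_i) ≠ x(g)}. Then X is nonempty and Stab(x) = {1} for every x ∈ X. -/
theorem exists_proper_coloring {G : Type*} [Group G] (n : ℕ) (a : Fin n → G)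
    (ha : ∀ i, a i ≠ 1) :
    ∃ x : G → Fin (2 * n + 1), ∀ (g : G) (i : Fin n), x (g * a i) ≠ x g := by
  classical
  set C := Fin (2 * n + 1) with hC
  set P : Set (Set (G × C)) :=
    {s | (∀ g c c', (g, c) ∈ s → (g, c') ∈ s → c = c') ∧
      ∀ (g : G) (i : Fin n) (c : C), (g, c) ∈ s → (g * a i, c) ∉ s} with hP
  have hchainub : ∀ c ⊆ P, IsChain (· ⊆ ·) c → c.Nonempty →
      ∃ ub ∈ P, ∀ s ∈ c, s ⊆ ub := by
    intro c hcP hchain hcne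
    refine ⟨⋃₀ c, ⟨?_, ?_⟩, fun s hs => Set.subset_sUnion_of_mem hs⟩
    · rintro g d d' ⟨s1, hs1, h1⟩ ⟨s2, hs2, h2⟩
      rcases hchain.total hs1 hs2 with h | h
      · exact (hcP hs2).1 g d d' (h h1) h2
      · exact (hcP hs1).1 g d d' h1 (h h2)
    · rintro g i d ⟨s1, hs1, h1⟩ ⟨s2, hs2, h2⟩
      rcases hchain.total hs1 hs2 with h | h
      · exact (hcP hs2).2 g i d (h h1) h2
      · exact (hcP hs1).2 g i d h1 (h h2)
  obtain ⟨m, -, hmP, hmax⟩ := zorn_subset_nonempty P hchainub ∅ ⟨by simp, by simp⟩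
  have htot : ∀ g : G, ∃ c : C, (g, c) ∈ m := by
      intro g0
      by_contra hg0
      push_neg at hg0
      set f : Fin n × Bool → Option C := fun p =>
        if h : ∃ c, (g0 * (if p.2 then a p.1 else (a p.1)⁻¹), c) ∈ m then some h.choose
        else none with hf
      set F : Finset (Option C) := Finset.univ.image f with hFdef
      have hcard : F.card ≤ 2 * n := by
        calc F.card ≤ Fintype.card (Fin n × Bool) := Finset.card_image_le.trans (by simp)
        _ = 2 * n := by simp [Fintype.card_prod, mul_comm]
      have hCcard : Fintype.card C = 2 * n + 1 := by simp [hC]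
      have hcex : ∃ c : C, some c ∉ F := by
        by_contra hall
        push_neg at hall
        have hsub : (Finset.univ.image (fun c : C => some c)) ⊆ F :=
          fun o ho => by
            simp only [Finset.mem_image, Finset.mem_univ, true_and] at ho
            obtain ⟨c, rfl⟩ := ho
            exact hall c
        have hle := Finset.card_le_card hsub
        rw [Finset.card_image_of_injective _ (Option.some_injective C),
          Finset.card_univ, hCcard] at hle
        omega
      obtain ⟨c, hc⟩ := hcex
      have hnb : ∀ (i : Fin n) (b : Bool),
          (g0 * (if b then a i else (a i)⁻¹), c) ∉ m := by
        intro i b hmem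
        apply hc
        have hex : ∃ c', (g0 * (if b then a i else (a i)⁻¹), c') ∈ m := ⟨c, hmem⟩
        have hfib : f (i, b) = some hex.choose := by
          simp only [hf]
          exact dif_pos hex
        have hcc : hex.choose = c := hmP.1 _ _ _ hex.choose_spec hmem
        exact Finset.mem_image.2 ⟨(i, b), Finset.mem_univ _, by rw [hfib, hcc]⟩
      set m' : Set (G × C) := insert (g0, c) m with hm'
      have hm'P : m' ∈ P := by
        constructor
        · rintro g d d' (h1 | h1) (h2 | h2)
          · rw [Prod.mk.injEq] at h1 h2
            exact h1.2.trans h2.2.symm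
          · rw [Prod.mk.injEq] at h1
            obtain ⟨rfl, -⟩ := h1
            exact absurd h2 (hg0 d')
          · rw [Prod.mk.injEq] at h2
            obtain ⟨rfl, -⟩ := h2
            exact absurd h1 (hg0 d)
          · exact hmP.1 g d d' h1 h2
        · rintro g i d (h1 | h1) (h2 | h2)
          · rw [Prod.mk.injEq] at h1 h2
            have : g * a i = g * 1 := by rw [mul_one, h2.1, ← h1.1]
            exact ha i (mul_left_cancel this)
          · rw [Prod.mk.injEq] at h1
            obtain ⟨rfl, rfl⟩ := h1
            have := hnb i true
            simp only [if_pos] at this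
            exact this h2
          · rw [Prod.mk.injEq] at h2
            obtain ⟨hg, rfl⟩ := h2
            have hg' : g = g0 * (a i)⁻¹ := by
              rw [← hg]; group
            have := hnb i false
            simp only [Bool.false_eq_true, if_neg, ite_false] at this
            exact this (hg' ▸ h1)
          · exact hmP.2 g i d h1 h2
      have heq : m' = m :=
        Set.Subset.antisymm (hmax hm'P (Set.subset_insert _ _)) (Set.subset_insert _ _)
      exact hg0 c (heq ▸ Set.mem_insert (g0, c) m)
  choose x hx using htot
  exact ⟨x, fun g i heq => hmP.2 g i (x g) (hx g) (heq ▸ hx (g * a i))⟩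

/-- If `a 1, …, a n` are nontrivial elements of `G` such that every nontrivial element of
`G` is conjugate to some `a i` (as in Ivanov's monster groups, which have finitely many
conjugacy classes), then `X = {x : G → Fin (2n+1) | ∀ g i, x (g * a i) ≠ x g}` is
nonempty and `Stab(x) = {1}` for every `x ∈ X`. -/
theorem stmt_13 {G : Type*} [Group G] (n : ℕ) (a : Fin n → G) (ha : ∀ i, a i ≠ 1)
    (hconj : ∀ g : G, g ≠ 1 → ∃ (i : Fin n) (h : G), h * g * h⁻¹ = a i) :
    ({x : G → Fin (2 * n + 1) | ∀ (g : G) (i : Fin n), x (g * a i) ≠ x g}).Nonempty ∧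
      (∀ x ∈ {x : G → Fin (2 * n + 1) | ∀ (g : G) (i : Fin n), x (g * a i) ≠ x g},
        Stab x = ({1} : Set G)) := by
  constructor
  · exact exists_proper_coloring n a ha
  · intro x hx
    ext g
    simp only [Set.mem_singleton_iff]
    constructor
    · intro hg
      by_contra hg1
      obtain ⟨i, h, hh⟩ := hconj g hg1
      have hper : x (g⁻¹ * h⁻¹) = x h⁻¹ := congrFun hg h⁻¹
      have h1 : x (h⁻¹ * (a i)⁻¹ * a i) ≠ x (h⁻¹ * (a i)⁻¹) := hx _ i
      have hg' : g⁻¹ * h⁻¹ = h⁻¹ * (a i)⁻¹ := by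
        rw [← hh]; group
      have e1 : h⁻¹ * (a i)⁻¹ * a i = h⁻¹ := by group
      rw [hg'] at hper
      rw [e1] at h1
      exact h1 hper.symm
    · rintro rfl
      funext k
      simp [Shift]
end

section
/- Define f' : [1,2) → [1,2) by f'(x) = 4x/3 if 1 ≤ x < 3/2 and f'(x) = 2x/3 if 3/2 ≤ x < 2. Then for every t ∈ [1,2) and every integer n ≥ 1, the n-th iterate satisfies f'^[n](t) ≠ t; in particular every orbit of f' is infinite and the group of maps generated by f' is infinite cyclic. -/
/-!
Each branch of `f'` multiplies by `2 ^ a / 3` with `a ∈ {1, 2}`, so `f'^[n] t = t * 2 ^ k / 3 ^ n`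
for some `k`. For `t ≠ 0` and `n ≥ 1` a fixed point of `f'^[n]` would force `2 ^ k = 3 ^ n`,
impossible by coprimality. The orbit of `t ≠ 0` avoids `0`, so no point of it is periodic,
which makes `n ↦ f'^[n] t` injective.
-/

/-- The piecewise affine map `f'` (given on `[1,2)` by `f' x = 4x/3` for `x < 3/2` and
`f' x = 2x/3` for `x ≥ 3/2`); it maps `[1,2)` into itself. -/
noncomputable def f' : ℝ → ℝ :=
  fun x => if x < 3 / 2 then 4 * x / 3 else 2 * x / 3

theorem Function.injective_iterate_of_iterate_ne {α : Type*} {f : α → α} {x : α}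
    (h : ∀ m n, n ≠ 0 → f^[n] (f^[m] x) ≠ f^[m] x) : Function.Injective fun n => f^[n] x := by
  intro m n hmn
  by_contra hne
  wlog hlt : m < n generalizing m n
  · exact this hmn.symm (Ne.symm hne) (by omega)
  apply h m (n - m) (by omega)
  rw [← Function.iterate_add_apply, Nat.sub_add_cancel hlt.le]
  exact hmn.symm

theorem Nat.two_pow_ne_three_pow {k n : ℕ} (hn : n ≠ 0) : 2 ^ k ≠ 3 ^ n := by
  intro h
  have h3 : 3 ^ n = 1 :=
    (Nat.coprime_self _).1 (h ▸ Nat.Coprime.pow k n (by norm_num : Nat.Coprime 2 3))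
  simp [hn] at h3

theorem exists_f'_eq (x : ℝ) : ∃ a : ℕ, f' x = x * 2 ^ a / 3 := by
  unfold f'
  split_ifs
  · exact ⟨2, by ring⟩
  · exact ⟨1, by ring⟩

theorem exists_iterate_f'_eq (t : ℝ) (n : ℕ) : ∃ k : ℕ, f'^[n] t = t * 2 ^ k / 3 ^ n := by
  induction n with
  | zero => exact ⟨0, by simp⟩
  | succ n ih =>
    obtain ⟨k, hk⟩ := ih
    obtain ⟨a, ha⟩ := exists_f'_eq (f'^[n] t)
    refine ⟨k + a, ?_⟩
    rw [Function.iterate_succ_apply', ha, hk]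
    ring

theorem iterate_f'_ne_zero {t : ℝ} (ht : t ≠ 0) (n : ℕ) : f'^[n] t ≠ 0 := by
  obtain ⟨k, hk⟩ := exists_iterate_f'_eq t n
  rw [hk]
  positivity

theorem iterate_f'_ne_self {t : ℝ} (ht : t ≠ 0) {n : ℕ} (hn : n ≠ 0) : f'^[n] t ≠ t := by
  obtain ⟨k, hk⟩ := exists_iterate_f'_eq t n
  intro hfix
  have h : (2 : ℝ) ^ k = 3 ^ n := by
    rw [hfix, eq_div_iff (by positivity)] at hk
    exact (mul_left_cancel₀ ht hk).symm
  exact Nat.two_pow_ne_three_pow hn (by exact_mod_cast h)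

/-- For every `t ∈ [1,2)`, no iterate `f'^[n]` with `n ≥ 1` fixes `t`; in particular the
orbit of every point of `[1,2)` under `f'` is infinite. -/
theorem stmt_15 :
    ∀ t ∈ Set.Ico (1 : ℝ) 2,
      (∀ n : ℕ, 1 ≤ n → f'^[n] t ≠ t) ∧
        (Set.range fun n : ℕ => f'^[n] t).Infinite := by
  intro t ht
  have ht0 : t ≠ 0 := by linarith [ht.1]
  refine ⟨fun n hn => iterate_f'_ne_self ht0 (by omega), Set.infinite_range_of_injective ?_⟩
  exact Function.injective_iterate_of_iterate_ne fun m n hn =>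
    iterate_f'_ne_self (iterate_f'_ne_zero ht0 m) hn
end
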